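/- Let E and F be Banach spaces over 𝕂, let 0 < p < ∞, let a ∈ E, and let f : E → F be an arbitrary mapping. Then f is absolutely p-summing at a, i.e. there is C ≥ 0 such that ∑_{j=1}^m ‖f(a + x_j) − f(a)‖^p ≤ C · sup_{φ ∈ B_{E'}} ∑_{j=1}^m |φ(x_j)|^p for all m ∈ ℕ and x₁,…,x_m ∈ E, if and only if there exist a constant C > 0 and a regular Borel probability measure μ on the closed unit ball B_{E'} of E' equipped with the weak-star topology such that ‖f(a + x) − f(a)‖ ≤ C · (∫_{B_{E'}} |φ(x)|^p dμ(φ))^{1/p} for all x ∈ E. -/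

import Mathlib

open MeasureTheory

open MeasureTheory TopologicalSpace
set_option linter.unusedSectionVars false
set_option linter.unusedVariables false

section RMK
variable {K : Type*} [TopologicalSpace K] [CompactSpace K] [T2Space K]

variable (Λ : C(K, ℝ) →L[ℝ] ℝ)

def testSet (S : Set K) : Set C(K, ℝ) :=
  {g | (∀ x, 0 ≤ g x) ∧ ∀ x ∈ S, 1 ≤ g x}

noncomputable def contentFun (S : Set K) : ℝ := sInf (Λ '' testSet S)

variable {Λ}

theorem one_mem_testSet (S : Set K) : (1 : C(K, ℝ)) ∈ testSet S :=
  ⟨fun x => by simp, fun x _ => by simp⟩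

variable (hpos : ∀ g : C(K, ℝ), (∀ x, 0 ≤ g x) → 0 ≤ Λ g)
include hpos

theorem lam_mono {g h : C(K, ℝ)} (hgh : ∀ x, g x ≤ h x) : Λ g ≤ Λ h := by
  have := hpos (h - g) (fun x => by simpa using hgh x)
  simp only [map_sub] at this; linarith

theorem testSet_bddBelow (S : Set K) : BddBelow (Λ '' testSet S) :=
  ⟨0, fun y ⟨g, hg, hy⟩ => hy ▸ hpos g hg.1⟩

theorem contentFun_nonneg (S : Set K) : 0 ≤ contentFun Λ S :=
  le_csInf ⟨Λ 1, 1, one_mem_testSet S, rfl⟩ (fun y ⟨g, hg, hy⟩ => hy ▸ hpos g hg.1)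

theorem contentFun_le {S : Set K} {g : C(K, ℝ)} (hg : g ∈ testSet S) :
    contentFun Λ S ≤ Λ g :=
  csInf_le (testSet_bddBelow hpos S) ⟨g, hg, rfl⟩

theorem contentFun_mono {S T : Set K} (hST : S ⊆ T) :
    contentFun Λ S ≤ contentFun Λ T :=
  csInf_le_csInf (testSet_bddBelow hpos S) ⟨Λ 1, 1, one_mem_testSet T, rfl⟩
    (Set.image_mono (fun g hg => ⟨hg.1, fun x hx => hg.2 x (hST hx)⟩))

theorem exists_testSet_lt {S : Set K} {ε : ℝ} (hε : 0 < ε) :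
    ∃ g ∈ testSet S, Λ g < contentFun Λ S + ε := by
  obtain ⟨y, ⟨g, hg, rfl⟩, hy⟩ := exists_lt_of_csInf_lt
    (⟨Λ 1, 1, one_mem_testSet S, rfl⟩ : (Λ '' testSet S).Nonempty)
    (lt_add_of_pos_right _ hε)
  exact ⟨g, hg, hy⟩

theorem contentFun_sup_le (S T : Set K) :
    contentFun Λ (S ∪ T) ≤ contentFun Λ S + contentFun Λ T := by
  refine le_of_forall_pos_le_add fun ε hε => ?_
  obtain ⟨g, hg, hgl⟩ := exists_testSet_lt hpos (S := S) (half_pos hε)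
  obtain ⟨h, hh, hhl⟩ := exists_testSet_lt hpos (S := T) (half_pos hε)
  have : g + h ∈ testSet (S ∪ T) := by
    refine ⟨fun x => add_nonneg (hg.1 x) (hh.1 x), fun x hx => ?_⟩
    rcases hx with hx | hx
    · have := hg.2 x hx; have := hh.1 x; simp only [ContinuousMap.add_apply]; linarith
    · have := hh.2 x hx; have := hg.1 x; simp only [ContinuousMap.add_apply]; linarith
  calc contentFun Λ (S ∪ T) ≤ Λ (g + h) := contentFun_le hpos this
    _ = Λ g + Λ h := map_add _ _ _
    _ ≤ contentFun Λ S + ε / 2 + (contentFun Λ T + ε / 2) := by linarith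
    _ = contentFun Λ S + contentFun Λ T + ε := by ring

theorem contentFun_sup_disjoint {S T : Set K} (hS : IsClosed S) (hT : IsClosed T)
    (hd : Disjoint S T) :
    contentFun Λ S + contentFun Λ T ≤ contentFun Λ (S ∪ T) := by
  obtain ⟨u, hu0, hu1, huI⟩ := exists_continuous_zero_one_of_isClosed hT hS hd.symm
  refine le_csInf ⟨Λ 1, 1, one_mem_testSet _, rfl⟩ ?_
  rintro y ⟨g, hg, rfl⟩
  have h1 : g * u ∈ testSet S := by
    refine ⟨fun x => mul_nonneg (hg.1 x) (huI x).1, fun x hx => ?_⟩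
    have := hg.2 x (Or.inl hx)
    have := hu1 hx
    simp only [ContinuousMap.mul_apply]
    calc (1:ℝ) = 1 * 1 := by ring
      _ ≤ g x * u x := by
        apply mul_le_mul (hg.2 x (Or.inl hx)) (le_of_eq ?_) zero_le_one
          (le_trans zero_le_one (hg.2 x (Or.inl hx)))
        exact (hu1 hx).symm
  have h2 : g * (1 - u) ∈ testSet T := by
    refine ⟨fun x => mul_nonneg (hg.1 x) (by simpa using (huI x).2), fun x hx => ?_⟩
    have hgx := hg.2 x (Or.inr hx)
    have hux : u x = 0 := hu0 hx
    simp only [ContinuousMap.mul_apply, ContinuousMap.sub_apply, ContinuousMap.one_apply, hux]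
    simpa using hgx
  have : Λ (g * u) + Λ (g * (1 - u)) = Λ g := by
    rw [← map_add]; congr 1; ext x; simp [ContinuousMap.mul_apply]; ring
  linarith [contentFun_le hpos h1, contentFun_le hpos h2]

theorem contentFun_univ (hone : Λ 1 = 1) : contentFun Λ (Set.univ : Set K) = 1 := by
  refine le_antisymm (le_trans (contentFun_le hpos (one_mem_testSet _)) hone.le) ?_
  refine le_csInf ⟨Λ 1, 1, one_mem_testSet _, rfl⟩ ?_
  rintro y ⟨g, hg, rfl⟩
  rw [← hone]
  exact lam_mono hpos fun x => by simpa using hg.2 x trivial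

end RMK

section RMK2
open MeasureTheory TopologicalSpace
open scoped ENNReal NNReal
variable {K : Type*} [TopologicalSpace K] [CompactSpace K] [T2Space K]
  [MeasurableSpace K] [BorelSpace K]
variable {Λ : C(K, ℝ) →L[ℝ] ℝ}
variable (hpos : ∀ g : C(K, ℝ), (∀ x, 0 ≤ g x) → 0 ≤ Λ g)

/-- The content associated to a positive functional. -/
noncomputable def rContent : Content K where
  toFun S := ⟨contentFun Λ S, contentFun_nonneg hpos S⟩
  mono' K₁ K₂ h := by
    exact contentFun_mono hpos h
  sup_disjoint' K₁ K₂ hd h1 h2 := by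
    have h1' := contentFun_sup_le (Λ := Λ) hpos (K₁ : Set K) K₂
    have h2' := contentFun_sup_disjoint hpos h1 h2 hd
    have : contentFun Λ ((K₁ : Set K) ∪ K₂) = contentFun Λ K₁ + contentFun Λ K₂ :=
      le_antisymm h1' h2'
    ext
    exact this
  sup_le' K₁ K₂ := by
    have := contentFun_sup_le (Λ := Λ) hpos (K₁ : Set K) K₂
    exact this

theorem rContent_apply (S : Compacts K) :
    ((rContent hpos) S : ℝ≥0∞) = ENNReal.ofReal (contentFun Λ (S : Set K)) := by
  exact (ENNReal.ofReal_coe_nnreal (p := (rContent hpos).toFun S)).symm.trans rfl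

include hpos

variable (hone : Λ 1 = 1)
include hone

theorem rmk_measure_univ : (rContent hpos).measure (Set.univ : Set K) = 1 := by
  rw [Content.measure_apply _ MeasurableSet.univ,
    Content.outerMeasure_of_isOpen _ _ isOpen_univ,
    Content.innerContent_of_isCompact _ isCompact_univ isOpen_univ,
    rContent_apply hpos ⟨Set.univ, isCompact_univ⟩]
  simp only [Compacts.coe_mk]
  rw [contentFun_univ hpos hone]
  simp

theorem rmk_isProbability : IsProbabilityMeasure (rContent hpos).measure :=
  ⟨rmk_measure_univ hpos hone⟩

theorem rmk_content_le_measure {S : Set K} (hS : IsClosed S) :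
    contentFun Λ S ≤ ((rContent hpos).measure S).toReal := by
  have hcpt : IsCompact S := hS.isCompact
  have h1 : ((rContent hpos) ⟨S, hcpt⟩ : ℝ≥0∞) ≤ (rContent hpos).measure S := by
    rw [Content.measure_apply _ hS.measurableSet]
    exact Content.le_outerMeasure_compacts _ _
  have hfin : (rContent hpos).measure S ≠ ⊤ := by
    have := rmk_measure_univ hpos hone
    have hle := measure_mono (μ := (rContent hpos).measure) (Set.subset_univ S)
    rw [this] at hle
    exact ne_top_of_le_ne_top ENNReal.one_ne_top hle
  rw [rContent_apply hpos ⟨S, hcpt⟩] at h1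
  have := ENNReal.toReal_mono hfin h1
  simp only [Compacts.coe_mk] at this
  rwa [ENNReal.toReal_ofReal (contentFun_nonneg hpos S)] at this
end RMK2

section RMK3
open MeasureTheory TopologicalSpace Finset
open scoped ENNReal NNReal
variable {K : Type*} [TopologicalSpace K] [CompactSpace K] [T2Space K]
  [MeasurableSpace K] [BorelSpace K]
variable {Λ : C(K, ℝ) →L[ℝ] ℝ}
variable (hpos : ∀ g : C(K, ℝ), (∀ x, 0 ≤ g x) → 0 ≤ Λ g) (hone : Λ 1 = 1)
include hpos hone

theorem rmk_le_integral (g : C(K, ℝ)) (hg : ∀ x, 0 ≤ g x) :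
    Λ g ≤ ∫ x, g x ∂(rContent hpos).measure := by
  set μ := (rContent hpos).measure with hμdef
  haveI : IsProbabilityMeasure μ := rmk_isProbability hpos hone
  have hgint : Integrable (fun x => g x) μ :=
    g.continuous.integrable_of_hasCompactSupport (HasCompactSupport.of_compactSpace _)
  refine le_of_forall_pos_le_add fun η hη => ?_
  set M : ℝ := ‖g‖ + 1 with hMdef
  have hM0 : (0:ℝ) < M := by positivity
  have hgM : ∀ x, g x ≤ M := fun x => by
    have h1 : ‖g x‖ ≤ ‖g‖ := g.norm_coe_le_norm x
    have h2 : g x ≤ ‖g x‖ := le_abs_self _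
    simp only [hMdef]; linarith
  set n : ℕ := max 1 ⌈2 * M / η⌉₊ with hndef
  have hn1 : 1 ≤ n := le_max_left _ _
  have hnR : (0:ℝ) < n := by exact_mod_cast hn1
  have hn : 2 * M / η ≤ n := by
    calc 2 * M / η ≤ (⌈2 * M / η⌉₊ : ℝ) := Nat.le_ceil _
      _ ≤ n := by exact_mod_cast le_max_right 1 _
  set δ : ℝ := M / n with hδdef
  have hδ0 : 0 < δ := div_pos hM0 hnR
  have hδn : δ * n = M := by rw [hδdef]; exact div_mul_cancel₀ M hnR.ne'
  have hδη : δ ≤ η / 2 := by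
    rw [hδdef, div_le_iff₀ hnR]
    calc M = (2 * M / η) * (η / 2) := by field_simp
      _ ≤ (n:ℝ) * (η / 2) := by
        apply mul_le_mul_of_nonneg_right hn (by positivity)
      _ = η / 2 * n := by ring
  set ε : ℝ := η / (2 * M) with hεdef
  have hε0 : 0 < ε := by positivity
  have hMε : M * ε = η / 2 := by
    rw [hεdef, mul_comm, div_mul_eq_mul_div, mul_comm 2 M, ← div_div, mul_div_assoc,
      div_self hM0.ne', mul_one]
  set S : ℕ → Set K := fun i => {x | ((i:ℝ) + 1) * δ ≤ g x} with hSdef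
  have hLS : ∀ i, IsClosed (S i) := fun i => isClosed_le continuous_const g.continuous
  have hex : ∀ i : ℕ, ∃ f ∈ testSet (S i), Λ f < contentFun Λ (S i) + ε :=
    fun i => exists_testSet_lt hpos hε0
  choose f hfmem hflt using hex
  -- Claim A : pointwise lower bound by indicators
  have claimA : ∀ x, δ * ∑ i ∈ range n, (S i).indicator (fun _ => (1:ℝ)) x ≤ g x := by
    intro x
    have hsum : ∑ i ∈ range n, (S i).indicator (fun _ => (1:ℝ)) x
        = (((range n).filter (fun i => x ∈ S i)).card : ℝ) := by
      rw [Finset.card_filter]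
      push_cast
      refine Finset.sum_congr rfl fun i _ => ?_
      by_cases h : x ∈ S i <;> simp [Set.indicator_apply, h]
    set k := ⌊g x / δ⌋₊ with hk
    have hsub : (range n).filter (fun i => x ∈ S i) ⊆ range k := by
      intro i hi
      simp only [Finset.mem_filter, Finset.mem_range] at hi ⊢
      have hxi : ((i:ℝ) + 1) * δ ≤ g x := hi.2
      have h2 : ((i:ℝ) + 1) ≤ g x / δ := (le_div_iff₀ hδ0).2 hxi
      have h3 : i + 1 ≤ k := Nat.le_floor (by push_cast; linarith)
      omega
    have hcard : (((range n).filter (fun i => x ∈ S i)).card : ℝ) ≤ k := by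
      have := Finset.card_le_card hsub
      simp only [Finset.card_range] at this
      exact_mod_cast this
    have hkle : (k : ℝ) ≤ g x / δ := Nat.floor_le (div_nonneg (hg x) hδ0.le)
    rw [hsum]
    calc δ * (((range n).filter (fun i => x ∈ S i)).card : ℝ) ≤ δ * k :=
          mul_le_mul_of_nonneg_left hcard hδ0.le
      _ ≤ δ * (g x / δ) := mul_le_mul_of_nonneg_left hkle hδ0.le
      _ = g x := by field_simp
  -- Claim B : pointwise upper bound by test functions
  have claimB : ∀ x, g x ≤ δ * ∑ i ∈ range n, f i x + δ := by
    intro x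
    set k := ⌊g x / δ⌋₊ with hk
    set m := min k n with hm
    have hfx1 : ∀ i < m, 1 ≤ f i x := by
      intro i hi
      refine (hfmem i).2 x ?_
      have hik : i + 1 ≤ k := by omega
      have : ((i:ℝ) + 1) ≤ k := by exact_mod_cast hik
      have hkle : (k : ℝ) ≤ g x / δ := Nat.floor_le (div_nonneg (hg x) hδ0.le)
      have : ((i:ℝ) + 1) * δ ≤ g x := by
        rw [← le_div_iff₀ hδ0]; linarith
      exact this
    have hsum : (m : ℝ) ≤ ∑ i ∈ range n, f i x := by
      calc (m : ℝ) = ∑ _i ∈ range m, (1:ℝ) := by simp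
        _ ≤ ∑ i ∈ range m, f i x :=
            Finset.sum_le_sum fun i hi => hfx1 i (Finset.mem_range.1 hi)
        _ ≤ ∑ i ∈ range n, f i x := by
            refine Finset.sum_le_sum_of_subset_of_nonneg
              (Finset.range_subset_range.2 (min_le_right _ _)) fun i _ _ => (hfmem i).1 x
    have hgm : g x ≤ δ * m + δ := by
      rcases le_or_gt k n with h | h
      · have hmk : m = k := min_eq_left h
        have h1 : g x / δ < k + 1 := Nat.lt_floor_add_one _
        have h2 : g x < ((k:ℝ) + 1) * δ := by
          rw [← div_lt_iff₀ hδ0]; push_cast; linarith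
        rw [hmk]; nlinarith
      · have hmn : m = n := min_eq_right h.le
        have h1 : g x ≤ M := hgM x
        rw [hmn]; rw [mul_comm] at hδn ⊢; linarith
    calc g x ≤ δ * m + δ := hgm
      _ ≤ δ * ∑ i ∈ range n, f i x + δ := by nlinarith
  -- Step Λ : Λ g ≤ δ * ∑ Λ (f i) + δ
  have stepL : Λ g ≤ δ * ∑ i ∈ range n, Λ (f i) + δ := by
    have hmono := lam_mono hpos (g := g) (h := δ • (∑ i ∈ range n, f i) + δ • 1) ?_
    · calc Λ g ≤ Λ (δ • (∑ i ∈ range n, f i) + δ • 1) := hmono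
        _ = δ * ∑ i ∈ range n, Λ (f i) + δ := by
          rw [map_add, Λ.map_smul, Λ.map_smul, map_sum, hone]
          simp [smul_eq_mul]
    · intro x
      simp only [ContinuousMap.add_apply, ContinuousMap.smul_apply, ContinuousMap.sum_apply,
        ContinuousMap.one_apply, smul_eq_mul, mul_one]
      exact claimB x
  -- Step μ : δ * ∑ (μ (S i)).toReal ≤ ∫ g dμ
  have hind_int : ∀ i, Integrable ((S i).indicator fun _ => (1:ℝ)) μ := fun i =>
    (integrable_indicator_iff (hLS i).measurableSet).2
      (integrableOn_const (measure_lt_top μ _).ne)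
  have stepM : δ * ∑ i ∈ range n, (μ (S i)).toReal ≤ ∫ x, g x ∂μ := by
    have heq : ∫ x, (δ * ∑ i ∈ range n, (S i).indicator (fun _ => (1:ℝ)) x) ∂μ
        = δ * ∑ i ∈ range n, (μ (S i)).toReal := by
      rw [integral_const_mul]
      congr 1
      rw [integral_finset_sum _ (fun i _ => hind_int i)]
      refine Finset.sum_congr rfl fun i _ => ?_
      rw [integral_indicator_const _ (hLS i).measurableSet]
      simp [measureReal_def]
    rw [← heq]
    refine integral_mono ?_ hgint claimA
    exact (integrable_finset_sum _ (fun i _ => hind_int i)).const_mul δ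
  -- content ≤ measure
  have hcm : ∀ i, contentFun Λ (S i) ≤ (μ (S i)).toReal :=
    fun i => rmk_content_le_measure hpos hone (hLS i)
  -- combine
  have h1 : ∑ i ∈ range n, Λ (f i) ≤ ∑ i ∈ range n, ((μ (S i)).toReal + ε) :=
    Finset.sum_le_sum fun i _ => le_trans (hflt i).le (by linarith [hcm i])
  have h2 : δ * ∑ i ∈ range n, Λ (f i)
      ≤ δ * ∑ i ∈ range n, (μ (S i)).toReal + δ * n * ε := by
    have := mul_le_mul_of_nonneg_left h1 hδ0.le
    rw [Finset.sum_add_distrib, mul_add, Finset.sum_const, Finset.card_range] at this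
    simpa [mul_assoc, nsmul_eq_mul] using this
  have : Λ g ≤ ∫ x, g x ∂μ + η / 2 + η / 2 := by
    rw [hδn] at h2
    calc Λ g ≤ δ * ∑ i ∈ range n, Λ (f i) + δ := stepL
      _ ≤ δ * ∑ i ∈ range n, (μ (S i)).toReal + M * ε + δ := by linarith
      _ ≤ ∫ x, g x ∂μ + η / 2 + η / 2 := by
          rw [hMε]; linarith [stepM, hδη]
  linarith
end RMK3

section HB
open MeasureTheory TopologicalSpace
variable {K : Type*} [TopologicalSpace K] [CompactSpace K] [T2Space K] [Nonempty K]

theorem exists_positive_functional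
    (M : Set C(K, ℝ)) (hMconv : Convex ℝ M) (hM0 : (0 : C(K, ℝ)) ∈ M)
    (hM : ∀ q ∈ M, ∃ x, q x ≤ 0) :
    ∃ Λ : C(K, ℝ) →L[ℝ] ℝ, (∀ g, (∀ x, 0 ≤ g x) → 0 ≤ Λ g) ∧ Λ 1 = 1 ∧
      ∀ q ∈ M, Λ q ≤ 0 := by
  set P : Set C(K, ℝ) := {g | ∀ x, 0 < g x} with hPdef
  have hPopen : IsOpen P := by
    rw [Metric.isOpen_iff]
    intro g hg
    obtain ⟨x₀, -, hx₀⟩ := IsCompact.exists_isMinOn isCompact_univ Set.univ_nonempty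
      g.continuous.continuousOn
    refine ⟨g x₀, hg x₀, fun h hh => ?_⟩
    intro x
    have h1 : ‖(h - g) x‖ ≤ ‖h - g‖ := (h - g).norm_coe_le_norm x
    have h2 : dist h g < g x₀ := hh
    rw [dist_eq_norm] at h2
    have h3 : |h x - g x| < g x₀ := by
      simp only [ContinuousMap.sub_apply] at h1
      calc |h x - g x| = ‖h x - g x‖ := rfl
        _ ≤ ‖h - g‖ := h1
        _ < g x₀ := h2
    have h4 : g x₀ ≤ g x := hx₀ (Set.mem_univ x)
    have := abs_lt.1 h3
    linarith
  have hPconv : Convex ℝ P := by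
    intro a ha b hb s t hs ht hst
    intro x
    simp only [ContinuousMap.add_apply, ContinuousMap.smul_apply, smul_eq_mul]
    rcases eq_or_lt_of_le hs with rfl | hs'
    · simp only [zero_mul, zero_add]
      have : t = 1 := by linarith
      simpa [this] using hb x
    · have h1 : 0 < s * a x := mul_pos hs' (ha x)
      have h2 : 0 ≤ t * b x := mul_nonneg ht (hb x).le
      linarith
  have hdisj : Disjoint P M := by
    rw [Set.disjoint_left]
    intro q hq hqM
    obtain ⟨x, hx⟩ := hM q hqM
    exact absurd (hq x) (not_lt.2 hx)
  obtain ⟨L, u, hLP, hLM⟩ := geometric_hahn_banach_open hPconv hPopen hMconv hdisj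
  have hu0 : u ≤ 0 := by simpa using hLM 0 hM0
  have honeP : (1 : C(K, ℝ)) ∈ P := fun x => by simp
  have hsmulP : ∀ t : ℝ, 0 < t → (t • (1 : C(K, ℝ))) ∈ P := by
    intro t ht x
    simp [ht]
  have hL1 : L 1 < u := hLP 1 honeP
  have hu0' : 0 ≤ u := by
    by_contra hu
    push_neg at hu
    have hL1neg : L 1 < 0 := hL1.trans hu
    have ht : (0:ℝ) < u / (2 * L 1) := div_pos_of_neg_of_neg hu (by linarith)
    have := hLP _ (hsmulP _ ht)
    rw [L.map_smul, smul_eq_mul] at this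
    have heq : u / (2 * L 1) * L 1 = u / 2 := by
      rw [div_mul_eq_mul_div, mul_comm 2 (L 1), ← div_div, mul_div_assoc, mul_comm,
        mul_div_assoc, div_self hL1neg.ne, one_mul]
    rw [heq] at this
    linarith
  have huz : u = 0 := le_antisymm hu0 hu0'
  have hL1neg : L 1 < 0 := by rw [huz] at hL1; exact hL1
  have hLnonpos : ∀ g : C(K, ℝ), (∀ x, 0 ≤ g x) → L g ≤ 0 := by
    intro g hg
    by_contra hLg
    push_neg at hLg
    set ε : ℝ := L g / (-2 * L 1) with hε
    have hε0 : 0 < ε := div_pos hLg (by linarith)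
    have hmem : g + ε • (1 : C(K, ℝ)) ∈ P := by
      intro x
      simp only [ContinuousMap.add_apply, ContinuousMap.smul_apply, ContinuousMap.one_apply,
        smul_eq_mul, mul_one]
      have := hg x
      linarith
    have := hLP _ hmem
    rw [map_add, L.map_smul, smul_eq_mul, huz] at this
    have heq : ε * L 1 = -(L g / 2) := by
      rw [hε, div_mul_eq_mul_div, neg_mul, mul_comm 2 (L 1), ← neg_mul, ← div_div,
        mul_div_assoc, mul_comm, mul_div_assoc, div_neg, div_self hL1neg.ne, neg_mul, one_mul]
    rw [heq] at this
    linarith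
  refine ⟨(-(L 1))⁻¹ • (-L), ?_, ?_, ?_⟩
  · intro g hg
    have h1 : (0:ℝ) < (-(L 1))⁻¹ := inv_pos.2 (by linarith)
    have h2 := hLnonpos g hg
    simp only [ContinuousLinearMap.smul_apply, ContinuousLinearMap.neg_apply, smul_eq_mul]
    nlinarith
  · simp only [ContinuousLinearMap.smul_apply, ContinuousLinearMap.neg_apply, smul_eq_mul]
    exact inv_mul_cancel₀ (ne_of_gt (by linarith : (0:ℝ) < -(L 1)))
  · intro q hq
    have h1 : 0 ≤ L q := by rw [← huz]; exact hLM q hq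
    have h2 : (0:ℝ) < (-(L 1))⁻¹ := inv_pos.2 (by linarith)
    simp only [ContinuousLinearMap.smul_apply, ContinuousLinearMap.neg_apply, smul_eq_mul]
    nlinarith
end HB

/-- The closed unit ball of the dual of `E`, equipped with the weak-star topology. -/
noncomputable def dualBall (𝕜 E : Type*) [RCLike 𝕜] [NormedAddCommGroup E]
    [NormedSpace 𝕜 E] : Set (WeakDual 𝕜 E) :=
  {φ | ‖WeakDual.toStrongDual φ‖ ≤ 1}

noncomputable instance (𝕜 E : Type*) [RCLike 𝕜] [NormedAddCommGroup E] [NormedSpace 𝕜 E] :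
    MeasurableSpace (dualBall 𝕜 E) := borel _

instance (𝕜 E : Type*) [RCLike 𝕜] [NormedAddCommGroup E] [NormedSpace 𝕜 E] :
    BorelSpace (dualBall 𝕜 E) := ⟨rfl⟩

section DualBallAux
open MeasureTheory TopologicalSpace Finset

variable (𝕜 E : Type*) [RCLike 𝕜] [NormedAddCommGroup E] [NormedSpace 𝕜 E]

instance : CompactSpace (dualBall 𝕜 E) := by
  rw [← isCompact_iff_compactSpace]
  have : dualBall 𝕜 E = WeakDual.toStrongDual ⁻¹' Metric.closedBall 0 1 := by
    ext φ; simp [dualBall, Metric.mem_closedBall, dist_zero_right]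
  rw [this]
  exact WeakDual.isCompact_closedBall (𝕜 := 𝕜) (0 : StrongDual 𝕜 E) 1

instance : Nonempty (dualBall 𝕜 E) := ⟨⟨0, by simp [dualBall]⟩⟩

variable {𝕜 E}

theorem dualBall_continuous (x : E) (p : ℝ) (hp : 0 < p) :
    Continuous fun φ : dualBall 𝕜 E => ‖(φ : WeakDual 𝕜 E) x‖ ^ p := by
  have h1 : Continuous fun φ : dualBall 𝕜 E => (φ : WeakDual 𝕜 E) x :=
    (WeakDual.eval_continuous x).comp continuous_subtype_val
  exact (h1.norm).rpow_const (fun φ => Or.inr hp.le)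

theorem dualBall_apply_le (φ : dualBall 𝕜 E) (x : E) : ‖(φ : WeakDual 𝕜 E) x‖ ≤ ‖x‖ := by
  have h1 : ‖WeakDual.toStrongDual (φ : WeakDual 𝕜 E) x‖ ≤
      ‖WeakDual.toStrongDual (φ : WeakDual 𝕜 E)‖ * ‖x‖ :=
    (WeakDual.toStrongDual (φ : WeakDual 𝕜 E)).le_opNorm x
  have h2 : ‖WeakDual.toStrongDual (φ : WeakDual 𝕜 E)‖ ≤ 1 := φ.2
  have h3 : ‖WeakDual.toStrongDual (φ : WeakDual 𝕜 E)‖ * ‖x‖ ≤ 1 * ‖x‖ :=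
    mul_le_mul_of_nonneg_right h2 (norm_nonneg x)
  calc ‖(φ : WeakDual 𝕜 E) x‖ = ‖WeakDual.toStrongDual (φ : WeakDual 𝕜 E) x‖ := rfl
    _ ≤ _ := h1
    _ ≤ 1 * ‖x‖ := h3
    _ = ‖x‖ := one_mul _

end DualBallAux

/-- The Pietsch-type domination theorem for arbitrary mappings: an arbitrary mapping
`f : E → F` between Banach spaces is absolutely `p`-summing at a point `a ∈ E` if and
only if it satisfies a Pietsch-type domination by a regular Borel probability measure on
the closed unit ball of the dual of `E` with the weak-star topology. -/
theorem arbitrary_mapping_domination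
    {𝕜 E F : Type*} [RCLike 𝕜]
    [NormedAddCommGroup E] [NormedSpace 𝕜 E] [CompleteSpace E]
    [NormedAddCommGroup F] [NormedSpace 𝕜 F] [CompleteSpace F]
    (p : ℝ) (hp : 0 < p) (a : E) (f : E → F) :
    (∃ C ≥ 0, ∀ (m : ℕ) (x : Fin m → E),
        ∑ j, ‖f (a + x j) - f a‖ ^ p ≤
          C * ⨆ φ : dualBall 𝕜 E, ∑ j, ‖(φ : WeakDual 𝕜 E) (x j)‖ ^ p) ↔
    (∃ C > 0, ∃ μ : Measure (dualBall 𝕜 E), μ.Regular ∧ IsProbabilityMeasure μ ∧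
        ∀ x : E, ‖f (a + x) - f a‖ ≤
          C * (∫ φ, ‖(φ : WeakDual 𝕜 E) x‖ ^ p ∂μ) ^ (1 / p)) := by
  classical
  have hR0 : ∀ (x : E) (φ : dualBall 𝕜 E), (0:ℝ) ≤ ‖(φ : WeakDual 𝕜 E) x‖ ^ p :=
    fun x φ => Real.rpow_nonneg (norm_nonneg _) p
  have hRB : ∀ (x : E) (φ : dualBall 𝕜 E), ‖(φ : WeakDual 𝕜 E) x‖ ^ p ≤ ‖x‖ ^ p :=
    fun x φ => Real.rpow_le_rpow (norm_nonneg _) (dualBall_apply_le φ x) hp.le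
  have hBdd : ∀ (m : ℕ) (w : Fin m → ℝ) (x : Fin m → E), (∀ i, 0 ≤ w i) →
      BddAbove (Set.range fun φ : dualBall 𝕜 E =>
        ∑ i, w i * ‖(φ : WeakDual 𝕜 E) (x i)‖ ^ p) := by
    intro m w x hw
    refine ⟨∑ i, w i * ‖x i‖ ^ p, ?_⟩
    rintro r ⟨φ, rfl⟩
    exact Finset.sum_le_sum fun i _ => mul_le_mul_of_nonneg_left (hRB (x i) φ) (hw i)
  constructor
  · rintro ⟨C, hC0, hsum⟩
    set A : E → ℝ := fun x => ‖f (a + x) - f a‖ ^ p with hAdef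
    have hA0 : ∀ x, 0 ≤ A x := fun x => Real.rpow_nonneg (norm_nonneg _) p
    set D := C + 1 with hDdef
    have hD0 : (0:ℝ) < D := by linarith
    have hsumD : ∀ (m : ℕ) (x : Fin m → E),
        ∑ j, A (x j) ≤
          D * ⨆ φ : dualBall 𝕜 E, ∑ j, ‖(φ : WeakDual 𝕜 E) (x j)‖ ^ p := by
      intro m x
      have hS0 : (0:ℝ) ≤ ⨆ φ : dualBall 𝕜 E, ∑ j, ‖(φ : WeakDual 𝕜 E) (x j)‖ ^ p :=
        Real.iSup_nonneg fun φ => Finset.sum_nonneg fun j _ => hR0 (x j) φ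
      calc ∑ j, A (x j)
          ≤ C * ⨆ φ : dualBall 𝕜 E, ∑ j, ‖(φ : WeakDual 𝕜 E) (x j)‖ ^ p := hsum m x
        _ ≤ D * ⨆ φ : dualBall 𝕜 E, ∑ j, ‖(φ : WeakDual 𝕜 E) (x j)‖ ^ p :=
            mul_le_mul_of_nonneg_right (by linarith) hS0
    -- natural number weights
    have hnat : ∀ (m : ℕ) (c : Fin m → ℕ) (x : Fin m → E),
        ∑ i, (c i : ℝ) * A (x i) ≤
          D * ⨆ φ : dualBall 𝕜 E, ∑ i, (c i : ℝ) * ‖(φ : WeakDual 𝕜 E) (x i)‖ ^ p := by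
      intro m c x
      set N := Fintype.card (Σ i : Fin m, Fin (c i)) with hN
      set e : Fin N ≃ (Σ i : Fin m, Fin (c i)) :=
        (Fintype.equivFin (Σ i : Fin m, Fin (c i))).symm with he
      have hsig : ∀ (F₀ : E → ℝ), ∑ j : Fin N, F₀ (x (e j).1) = ∑ i, (c i : ℝ) * F₀ (x i) := by
        intro F₀
        rw [Equiv.sum_comp e (fun σ : (Σ i : Fin m, Fin (c i)) => F₀ (x σ.1))]
        rw [← Finset.univ_sigma_univ, Finset.sum_sigma]
        refine Finset.sum_congr rfl fun i _ => ?_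
        simp [Finset.sum_const, mul_comm]
      have h := hsumD N (fun j => x (e j).1)
      rw [hsig (fun z => A z)] at h
      refine h.trans (mul_le_mul_of_nonneg_left (le_of_eq ?_) hD0.le)
      exact iSup_congr fun φ => hsig (fun z => ‖(φ : WeakDual 𝕜 E) z‖ ^ p)
    -- real weights
    have hkey : ∀ (m : ℕ) (w : Fin m → ℝ) (x : Fin m → E), (∀ i, 0 ≤ w i) →
        ∑ i, w i * A (x i) ≤
          D * ⨆ φ : dualBall 𝕜 E, ∑ i, w i * ‖(φ : WeakDual 𝕜 E) (x i)‖ ^ p := by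
      intro m w x hw
      set S := ⨆ φ : dualBall 𝕜 E, ∑ i, w i * ‖(φ : WeakDual 𝕜 E) (x i)‖ ^ p with hSdef
      set B := ∑ i, ‖x i‖ ^ p with hBdef
      have hB0 : (0:ℝ) ≤ B :=
        Finset.sum_nonneg fun i _ => Real.rpow_nonneg (norm_nonneg _) _
      refine le_of_forall_pos_le_add fun η hη => ?_
      set N : ℕ := max 1 (⌈D * B / η⌉₊ + 1) with hNdef
      have hN1 : 1 ≤ N := le_max_left _ _
      have hNR : (0:ℝ) < N := by exact_mod_cast hN1
      have hDBN : D * B / N < η := by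
        have h1 : D * B / η < N := by
          calc D * B / η ≤ (⌈D * B / η⌉₊ : ℝ) := Nat.le_ceil _
            _ < (⌈D * B / η⌉₊ : ℝ) + 1 := by linarith
            _ ≤ N := by exact_mod_cast le_max_right 1 (⌈D * B / η⌉₊ + 1)
        rw [div_lt_iff₀ hNR]
        rw [div_lt_iff₀ hη] at h1
        linarith
      set c : Fin m → ℕ := fun i => ⌈w i * N⌉₊ with hcdef
      have hc1 : ∀ i, w i * N ≤ c i := fun i => Nat.le_ceil _
      have hc2 : ∀ i, (c i : ℝ) ≤ w i * N + 1 := fun i =>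
        (Nat.ceil_lt_add_one (mul_nonneg (hw i) hNR.le)).le
      have hnat' := hnat m c x
      have hsup : (⨆ φ : dualBall 𝕜 E, ∑ i, (c i : ℝ) * ‖(φ : WeakDual 𝕜 E) (x i)‖ ^ p)
          ≤ N * S + B := by
        refine ciSup_le fun φ => ?_
        have h1 : ∑ i, (c i : ℝ) * ‖(φ : WeakDual 𝕜 E) (x i)‖ ^ p
            ≤ ∑ i, (w i * N + 1) * ‖(φ : WeakDual 𝕜 E) (x i)‖ ^ p :=
          Finset.sum_le_sum fun i _ => mul_le_mul_of_nonneg_right (hc2 i) (hR0 (x i) φ)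
        have h2 : ∑ i, (w i * N + 1) * ‖(φ : WeakDual 𝕜 E) (x i)‖ ^ p
            = N * ∑ i, w i * ‖(φ : WeakDual 𝕜 E) (x i)‖ ^ p
              + ∑ i, ‖(φ : WeakDual 𝕜 E) (x i)‖ ^ p := by
          rw [Finset.mul_sum, ← Finset.sum_add_distrib]
          exact Finset.sum_congr rfl fun i _ => by ring
        have h3 : ∑ i, w i * ‖(φ : WeakDual 𝕜 E) (x i)‖ ^ p ≤ S :=
          le_ciSup (hBdd m w x hw) φ
        have h4 : ∑ i, ‖(φ : WeakDual 𝕜 E) (x i)‖ ^ p ≤ B :=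
          Finset.sum_le_sum fun i _ => hRB (x i) φ
        calc ∑ i, (c i : ℝ) * ‖(φ : WeakDual 𝕜 E) (x i)‖ ^ p
            ≤ N * ∑ i, w i * ‖(φ : WeakDual 𝕜 E) (x i)‖ ^ p
              + ∑ i, ‖(φ : WeakDual 𝕜 E) (x i)‖ ^ p := by rw [← h2]; exact h1
          _ ≤ N * S + B := by
              have := mul_le_mul_of_nonneg_left h3 hNR.le
              linarith
      have hLHS : (N:ℝ) * ∑ i, w i * A (x i) ≤ ∑ i, (c i : ℝ) * A (x i) := by
        rw [Finset.mul_sum]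
        refine Finset.sum_le_sum fun i _ => ?_
        calc (N:ℝ) * (w i * A (x i)) = (w i * N) * A (x i) := by ring
          _ ≤ (c i : ℝ) * A (x i) := mul_le_mul_of_nonneg_right (hc1 i) (hA0 (x i))
      have hchain : (N:ℝ) * ∑ i, w i * A (x i) ≤ D * (N * S + B) :=
        le_trans hLHS (hnat'.trans (mul_le_mul_of_nonneg_left hsup hD0.le))
      have hfin : ∑ i, w i * A (x i) ≤ D * S + D * B / N := by
        rw [← sub_nonneg]
        have h5 : (0:ℝ) ≤ N * (D * S + D * B / N - ∑ i, w i * A (x i)) := by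
          have h6 : (N:ℝ) * (D * B / N) = D * B := by field_simp
          have h7 : (N:ℝ) * (D * S + D * B / N - ∑ i, w i * A (x i))
              = D * (N * S) + N * (D * B / N) - N * ∑ i, w i * A (x i) := by ring
          rw [h7, h6]
          have : D * (N * S + B) = D * (N * S) + D * B := by ring
          linarith [hchain]
        have h9 : (0:ℝ) ≤ D * S + D * B / N - ∑ i, w i * A (x i) := by
          have h10 := div_nonneg h5 hNR.le
          rwa [mul_div_cancel_left₀ _ (ne_of_gt hNR)] at h10
        linarith
      exact hfin.trans (by linarith [hDBN])
    -- continuous maps and the convex set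
    set G : E → C(dualBall 𝕜 E, ℝ) :=
      fun x => ⟨fun φ => ‖(φ : WeakDual 𝕜 E) x‖ ^ p, dualBall_continuous x p hp⟩ with hGdef
    set H : E → C(dualBall 𝕜 E, ℝ) := fun x => A x • 1 - D • G x with hHdef
    have hHapp : ∀ (x : E) (φ : dualBall 𝕜 E),
        H x φ = A x - D * ‖(φ : WeakDual 𝕜 E) x‖ ^ p := by
      intro x φ
      simp [hHdef, hGdef, smul_eq_mul]
    set Mset : Set C(dualBall 𝕜 E, ℝ) :=
      {q | ∃ (m : ℕ) (w : Fin m → ℝ) (x : Fin m → E),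
        (∀ i, 0 ≤ w i) ∧ ∑ i, w i = 1 ∧ q = ∑ i, w i • H (x i)} with hMsetdef
    have hH0 : H 0 = 0 := by
      ext φ
      rw [hHapp]
      simp [hAdef, Real.zero_rpow hp.ne']
    have hM0 : (0 : C(dualBall 𝕜 E, ℝ)) ∈ Mset := by
      refine ⟨1, fun _ => 1, fun _ => 0, fun i => zero_le_one, by simp, ?_⟩
      simp [hH0]
    have hMconv : Convex ℝ Mset := by
      rintro q1 ⟨m1, w1, x1, hw1, hs1, rfl⟩ q2 ⟨m2, w2, x2, hw2, hs2, rfl⟩ s t hs ht hst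
      refine ⟨m1 + m2, Fin.append (fun i => s * w1 i) (fun i => t * w2 i),
        Fin.append x1 x2, ?_, ?_, ?_⟩
      · intro i
        refine Fin.addCases (fun j => ?_) (fun j => ?_) i
        · rw [Fin.append_left]; exact mul_nonneg hs (hw1 j)
        · rw [Fin.append_right]; exact mul_nonneg ht (hw2 j)
      · rw [Fin.sum_univ_add]
        simp only [Fin.append_left, Fin.append_right]
        rw [← Finset.mul_sum, ← Finset.mul_sum, hs1, hs2, mul_one, mul_one]
        exact hst
      · rw [Fin.sum_univ_add]
        simp only [Fin.append_left, Fin.append_right]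
        rw [Finset.smul_sum, Finset.smul_sum]
        congr 1
        · exact Finset.sum_congr rfl fun i _ => smul_smul s (w1 i) (H (x1 i))
        · exact Finset.sum_congr rfl fun i _ => smul_smul t (w2 i) (H (x2 i))
    have hMpt : ∀ q ∈ Mset, ∃ φ : dualBall 𝕜 E, q φ ≤ 0 := by
      rintro q ⟨m, w, x, hw, hs1, rfl⟩
      have hFcont : Continuous fun φ : dualBall 𝕜 E =>
          ∑ i, w i * ‖(φ : WeakDual 𝕜 E) (x i)‖ ^ p :=
        continuous_finset_sum _ fun i _ =>
          continuous_const.mul (dualBall_continuous (x i) p hp)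
      obtain ⟨φ₀, -, hmax⟩ := isCompact_univ.exists_isMaxOn Set.univ_nonempty
        hFcont.continuousOn
      have hSeq : (⨆ φ : dualBall 𝕜 E, ∑ i, w i * ‖(φ : WeakDual 𝕜 E) (x i)‖ ^ p)
          = ∑ i, w i * ‖(φ₀ : WeakDual 𝕜 E) (x i)‖ ^ p :=
        le_antisymm (ciSup_le fun φ => hmax (Set.mem_univ φ)) (le_ciSup (hBdd m w x hw) φ₀)
      refine ⟨φ₀, ?_⟩
      have happ : (∑ i, w i • H (x i)) φ₀
          = ∑ i, w i * A (x i) - D * ∑ i, w i * ‖(φ₀ : WeakDual 𝕜 E) (x i)‖ ^ p := by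
        rw [ContinuousMap.sum_apply, Finset.mul_sum, ← Finset.sum_sub_distrib]
        refine Finset.sum_congr rfl fun i _ => ?_
        rw [ContinuousMap.smul_apply, hHapp, smul_eq_mul]
        ring
      rw [happ]
      have hk := hkey m w x hw
      rw [hSeq] at hk
      linarith
    obtain ⟨Λ, hpos, hone, hMle⟩ := exists_positive_functional Mset hMconv hM0 hMpt
    refine ⟨D ^ (1/p), Real.rpow_pos_of_pos hD0 _, (rContent hpos).measure, inferInstance,
      rmk_isProbability hpos hone, fun x => ?_⟩
    set I := ∫ φ, ‖(φ : WeakDual 𝕜 E) x‖ ^ p ∂(rContent hpos).measure with hIdef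
    have hHx : H x ∈ Mset := by
      refine ⟨1, fun _ => 1, fun _ => x, fun i => zero_le_one, by simp, by simp⟩
    have h1 : Λ (H x) ≤ 0 := hMle _ hHx
    have h2 : Λ (H x) = A x - D * Λ (G x) := by
      have : H x = A x • (1 : C(dualBall 𝕜 E, ℝ)) - D • G x := rfl
      rw [this, map_sub, Λ.map_smul, Λ.map_smul, hone, smul_eq_mul, smul_eq_mul, mul_one]
    have h3 : Λ (G x) ≤ I := by
      have := rmk_le_integral hpos hone (G x) (fun φ => hR0 x φ)
      exact this
    have hI0 : 0 ≤ I := integral_nonneg fun φ => hR0 x φ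
    have h4 : A x ≤ D * I := by
      have h5 : D * Λ (G x) ≤ D * I := mul_le_mul_of_nonneg_left h3 hD0.le
      linarith
    have h5 : ‖f (a + x) - f a‖ = (A x) ^ (1/p) := by
      have : (‖f (a + x) - f a‖ ^ p) ^ (1/p) = ‖f (a + x) - f a‖ := by
        rw [← Real.rpow_mul (norm_nonneg _), mul_one_div_cancel hp.ne', Real.rpow_one]
      exact this.symm
    calc ‖f (a + x) - f a‖ = (A x) ^ (1/p) := h5
      _ ≤ (D * I) ^ (1/p) := Real.rpow_le_rpow (hA0 x) h4 (by positivity)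
      _ = D ^ (1/p) * I ^ (1/p) := Real.mul_rpow hD0.le hI0
  · rintro ⟨C, hC0, μ, hreg, hprob, hdom⟩
    refine ⟨C ^ p, (Real.rpow_pos_of_pos hC0 p).le, fun m x => ?_⟩
    have hint : ∀ j : Fin m,
        Integrable (fun φ : dualBall 𝕜 E => ‖(φ : WeakDual 𝕜 E) (x j)‖ ^ p) μ :=
      fun j => (dualBall_continuous (x j) p hp).integrable_of_hasCompactSupport
        (HasCompactSupport.of_compactSpace _)
    have h1 : ∀ j : Fin m, ‖f (a + x j) - f a‖ ^ p
        ≤ C ^ p * ∫ φ, ‖(φ : WeakDual 𝕜 E) (x j)‖ ^ p ∂μ := by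
      intro j
      have hI0 : 0 ≤ ∫ φ, ‖(φ : WeakDual 𝕜 E) (x j)‖ ^ p ∂μ :=
        integral_nonneg fun φ => hR0 (x j) φ
      have h2 := Real.rpow_le_rpow (norm_nonneg _) (hdom (x j)) hp.le
      rwa [Real.mul_rpow hC0.le (Real.rpow_nonneg hI0 _), ← Real.rpow_mul hI0,
        one_div_mul_cancel hp.ne', Real.rpow_one] at h2
    have h3 : ∑ j, ‖f (a + x j) - f a‖ ^ p
        ≤ C ^ p * ∑ j, ∫ φ, ‖(φ : WeakDual 𝕜 E) (x j)‖ ^ p ∂μ := by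
      rw [Finset.mul_sum]
      exact Finset.sum_le_sum fun j _ => h1 j
    have h4 : ∑ j, ∫ φ, ‖(φ : WeakDual 𝕜 E) (x j)‖ ^ p ∂μ
        = ∫ φ, ∑ j, ‖(φ : WeakDual 𝕜 E) (x j)‖ ^ p ∂μ :=
      (integral_finset_sum _ fun j _ => hint j).symm
    have hbdd : BddAbove (Set.range fun φ : dualBall 𝕜 E =>
        ∑ j, ‖(φ : WeakDual 𝕜 E) (x j)‖ ^ p) := by
      refine ⟨∑ j, ‖x j‖ ^ p, ?_⟩
      rintro r ⟨φ, rfl⟩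
      exact Finset.sum_le_sum fun j _ => hRB (x j) φ
    have h5 : ∫ φ, ∑ j, ‖(φ : WeakDual 𝕜 E) (x j)‖ ^ p ∂μ
        ≤ ⨆ φ : dualBall 𝕜 E, ∑ j, ‖(φ : WeakDual 𝕜 E) (x j)‖ ^ p := by
      calc ∫ φ, ∑ j, ‖(φ : WeakDual 𝕜 E) (x j)‖ ^ p ∂μ
          ≤ ∫ _φ, (⨆ ψ : dualBall 𝕜 E, ∑ j, ‖(ψ : WeakDual 𝕜 E) (x j)‖ ^ p) ∂μ :=
            integral_mono (integrable_finset_sum _ fun j _ => hint j)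
              (integrable_const _) (fun φ => le_ciSup hbdd φ)
        _ = ⨆ φ : dualBall 𝕜 E, ∑ j, ‖(φ : WeakDual 𝕜 E) (x j)‖ ^ p := by
            simp [measure_univ]
    calc ∑ j, ‖f (a + x j) - f a‖ ^ p
        ≤ C ^ p * ∑ j, ∫ φ, ‖(φ : WeakDual 𝕜 E) (x j)‖ ^ p ∂μ := h3
      _ = C ^ p * ∫ φ, ∑ j, ‖(φ : WeakDual 𝕜 E) (x j)‖ ^ p ∂μ := by rw [h4]
      _ ≤ C ^ p * ⨆ φ : dualBall 𝕜 E, ∑ j, ‖(φ : WeakDual 𝕜 E) (x j)‖ ^ p :=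
          mul_le_mul_of_nonneg_left h5 (Real.rpow_pos_of_pos hC0 p).le
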